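/- arXiv:2506.21212 — 3 statements merged into one kernel-verified Lean document; each statement's English description precedes it below -/
import Mathlib

section
/- Suppose H : ℝ^d × ℝ⁺ → ℝ is C¹ in p and satisfies, for constants C > 0, α > 1, β > 0: (i) H(0,m) ≥ −C(m^β + 1), and (ii) D_pH(p,m)·p ≥ (1/C)|p|^α − C(m^β + 1), and (iii) |D_pH(p,m)| ≤ C(|p|^(α−1) + m^(β−β/α) + 1). Then there exists C' > 0 such that H(p,m) ≥ (1/C')|p|^α − C'(m^β + 1) for all (p,m) ∈ ℝ^d × ℝ⁺. -/
open Real Set RealInnerProductSpace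

private lemma aux_mono {f f' : ℝ → ℝ} {a b : ℝ} (hab : a ≤ b)
    (hf : ∀ t ∈ Set.Icc a b, HasDerivAt f (f' t) t)
    (h : ∀ t ∈ Set.Icc a b, 0 ≤ f' t) : f a ≤ f b := by
  have hm : MonotoneOn f (Set.Icc a b) := by
    apply monotoneOn_of_deriv_nonneg (convex_Icc a b)
    · exact fun t ht => (hf t ht).continuousAt.continuousWithinAt
    · intro t ht
      rw [interior_Icc] at ht
      exact ((hf t (Ioo_subset_Icc_self ht)).differentiableAt).differentiableWithinAt
    · intro t ht
      rw [interior_Icc] at ht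
      rw [(hf t (Ioo_subset_Icc_self ht)).deriv]
      exact h t (Ioo_subset_Icc_self ht)
  exact hm (left_mem_Icc.2 hab) (right_mem_Icc.2 hab) hab

private lemma aux_comp {g G φ φ' : ℝ → ℝ} {a b : ℝ} (hab : a ≤ b)
    (hg : ∀ t ∈ Set.Icc a b, HasDerivAt g (G t) t)
    (hφ : ∀ t ∈ Set.Icc a b, HasDerivAt φ (φ' t) t)
    (h : ∀ t ∈ Set.Icc a b, φ' t ≤ G t) : φ b - φ a ≤ g b - g a := by
  have := aux_mono hab (f := fun t => g t - φ t) (f' := fun t => G t - φ' t)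
    (fun t ht => (hg t ht).sub (hφ t ht)) (fun t ht => sub_nonneg.2 (h t ht))
  linarith

private lemma rpow_sub_one_mul {x α : ℝ} (hx : 0 ≤ x) (hα : 1 < α) :
    x ^ (α - 1) * x = x ^ α := by
  rcases eq_or_lt_of_le hx with h | h
  · rw [← h, Real.zero_rpow (by linarith), Real.zero_rpow (by linarith), mul_zero]
  · rw [← Real.rpow_add_one (ne_of_gt h), sub_add_cancel]

set_option maxHeartbeats 1000000

/-- the lower bound `H(p,m) ≥ (1/C')|p|^α − C'(m^β+1)` from the
alternative conditions (one direction of Lemma 2.5). -/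
theorem stmt7 {d : ℕ} (H : EuclideanSpace ℝ (Fin d) → ℝ → ℝ)
    (DpH : EuclideanSpace ℝ (Fin d) → ℝ → EuclideanSpace ℝ (Fin d))
    (C α β : ℝ) (hC : 0 < C) (hα : 1 < α) (hβ : 0 < β)
    (hgrad : ∀ p : EuclideanSpace ℝ (Fin d), ∀ m > (0:ℝ),
      HasGradientAt (fun p' => H p' m) (DpH p m) p)
    (h0 : ∀ m > (0:ℝ), -C * (m ^ β + 1) ≤ H 0 m)
    (hcoerc : ∀ p : EuclideanSpace ℝ (Fin d), ∀ m > (0:ℝ),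
      (1/C) * ‖p‖ ^ α - C * (m ^ β + 1) ≤ ⟪DpH p m, p⟫)
    (hDpH : ∀ p : EuclideanSpace ℝ (Fin d), ∀ m > (0:ℝ),
      ‖DpH p m‖ ≤ C * (‖p‖ ^ (α - 1) + m ^ (β - β/α) + 1)) :
    ∃ C' > (0:ℝ), ∀ p : EuclideanSpace ℝ (Fin d), ∀ m > (0:ℝ),
      (1/C') * ‖p‖ ^ α - C' * (m ^ β + 1) ≤ H p m := by
  have hα0 : (0:ℝ) < α := by linarith
  have hα1 : (0:ℝ) < α - 1 := by linarith
  -- the splitting point s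
  set A : ℝ := 2 * C ^ 2 * α + 1 with hAdef
  have hA1 : 1 < A := by nlinarith
  have hA0 : 0 < A := by linarith
  set s : ℝ := A ^ (-1/α) with hsdef
  have hs0 : 0 < s := Real.rpow_pos_of_pos hA0 _
  have hs1 : s < 1 := Real.rpow_lt_one_of_one_lt_of_neg hA1 (by
    rw [neg_div]; exact neg_neg_iff_pos.2 (by positivity))
  have hsα : s ^ α = 1 / A := by
    rw [hsdef, ← Real.rpow_mul hA0.le, div_mul_cancel₀ _ hα0.ne', Real.rpow_neg_one, one_div]
  -- the absorption constant
  have hc0 : (1/(C*α)) * (1 - s ^ α) - C * s ^ α = C / A := by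
    rw [hsα]; field_simp; ring
  set a : ℝ := C / (2 * A) with hadef
  have ha0 : 0 < a := by positivity
  -- Young exponent
  set q : ℝ := α / (α - 1) with hqdef
  have hq : α.HolderConjugate q := Real.HolderConjugate.conjExponent hα
  have hq1 : 1 < q := hq.symm.lt
  set lam : ℝ := (a * α / 2) ^ (1/α) with hlamdef
  have hlam0 : 0 < lam := Real.rpow_pos_of_pos (by positivity) _
  have hlamα : lam ^ α = a * α / 2 := by
    rw [hlamdef, ← Real.rpow_mul (by positivity), one_div_mul_cancel hα0.ne', Real.rpow_one]
  set K : ℝ := (C / lam) ^ q with hKdef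
  have hK0 : 0 < K := Real.rpow_pos_of_pos (by positivity) _
  set B : ℝ := C / s + C + K with hBdef
  have hB0 : 0 < B := by positivity
  refine ⟨max (1/a) B + 1, by positivity, fun p m hm => ?_⟩
  set γ : ℝ := β - β/α with hγdef
  set P : ℝ := ‖p‖ with hPdef
  have hP0 : 0 ≤ P := norm_nonneg p
  set X : ℝ := P ^ α with hXdef
  have hX0 : 0 ≤ X := Real.rpow_nonneg hP0 _
  set Y : ℝ := m ^ β with hYdef
  have hY0 : 0 ≤ Y := Real.rpow_nonneg hm.le _
  set Z : ℝ := m ^ γ with hZdef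
  have hZ0 : 0 ≤ Z := Real.rpow_nonneg hm.le _
  -- derivative of `t ↦ H (t • p) m`
  have hgd : ∀ t : ℝ, HasDerivAt (fun t => H (t • p) m) (⟪DpH (t • p) m, p⟫) t := by
    intro t
    have hline : HasDerivAt (fun t : ℝ => t • p) p t := by
      simpa using (hasDerivAt_id t).smul_const p
    have hf := (hgrad (t • p) m hm).hasFDerivAt
    have h2 := hf.comp_hasDerivAt t hline
    simp at h2
    exact h2
  -- Part B : lower bound on `[0, s]`
  set M : ℝ := C * (s ^ (α-1) * P ^ (α-1) + Z + 1) * P with hMdef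
  have hB1 : H ((0:ℝ) • p) m + M * 0 ≤ H (s • p) m + M * s := by
    apply aux_mono (f := fun t => H (t • p) m + M * t)
      (f' := fun t => ⟪DpH (t • p) m, p⟫ + M) hs0.le
    · intro t ht
      have h1 : HasDerivAt (fun t : ℝ => M * t) M t := by
        simpa using (hasDerivAt_id t).const_mul M
      exact (hgd t).add h1
    · intro t ht
      have hnorm : ‖t • p‖ = t * P := by
        rw [norm_smul, Real.norm_eq_abs, abs_of_nonneg ht.1]
      have h1 : ‖DpH (t • p) m‖ ≤ C * (s ^ (α-1) * P ^ (α-1) + Z + 1) := by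
        refine le_trans (hDpH (t • p) m hm) ?_
        have h2 : ‖t • p‖ ^ (α - 1) ≤ s ^ (α-1) * P ^ (α-1) := by
          rw [hnorm, Real.mul_rpow ht.1 hP0]
          exact mul_le_mul_of_nonneg_right
            (Real.rpow_le_rpow ht.1 ht.2 hα1.le) (Real.rpow_nonneg hP0 _)
        exact mul_le_mul_of_nonneg_left (by linarith only [h2]) hC.le
      have h3 := (abs_le.1 (abs_real_inner_le_norm (DpH (t • p) m) p)).1
      have h4 : ‖DpH (t • p) m‖ * P ≤ M := by
        rw [hMdef]; exact mul_le_mul_of_nonneg_right h1 hP0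
      have h5 : -(‖DpH (t • p) m‖ * ‖p‖) ≤ ⟪DpH (t • p) m, p⟫ := h3
      simp only [← hPdef] at h5
      linarith only [h4, h5]
  -- Part A : comparison on `[s, 1]`
  have hφd : ∀ t ∈ Set.Icc s 1, HasDerivAt (fun t => (1/(C*α)) * (t ^ α * X) - (C/s*(Y+1)) * t)
      ((1/C) * t ^ (α-1) * X - C/s*(Y+1)) t := by
    intro t ht
    have h1 : HasDerivAt (fun t : ℝ => t ^ α) (α * t ^ (α-1)) t :=
      Real.hasDerivAt_rpow_const (Or.inr hα.le)
    have h2 := ((h1.mul_const X).const_mul (1/(C*α))).sub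
      ((hasDerivAt_id t).const_mul (C/s*(Y+1)))
    refine h2.congr_deriv ?_
    have hCα : C * α ≠ 0 := by positivity
    field_simp
  have hlow : ∀ t ∈ Set.Icc s 1, (1/C) * t ^ (α-1) * X - C/s*(Y+1) ≤ ⟪DpH (t • p) m, p⟫ := by
    intro t ht
    have ht0 : 0 < t := lt_of_lt_of_le hs0 ht.1
    have h1 := hcoerc (t • p) m hm
    rw [real_inner_smul_right] at h1
    have hnorm : ‖t • p‖ ^ α = t ^ α * X := by
      rw [norm_smul, Real.norm_eq_abs, abs_of_pos ht0, Real.mul_rpow ht0.le hP0, hXdef]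
    rw [hnorm] at h1
    rw [← mul_le_mul_iff_right₀ ht0]
    have htt : t * (t ^ (α-1)) = t ^ α := by
      nth_rewrite 1 [← Real.rpow_one t]
      rw [← Real.rpow_add ht0]
      ring_nf
    have hkey : t * ((1/C) * t ^ (α-1) * X) = (1/C) * (t ^ α * X) := by
      rw [← htt]; ring
    have hY1 : (0:ℝ) ≤ Y + 1 := by linarith
    have h2 : C * (Y + 1) ≤ t * (C/s*(Y+1)) := by
      have h3 : C ≤ t * (C / s) := by
        rw [mul_div_assoc', le_div_iff₀ hs0]
        calc C * s = s * C := mul_comm _ _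
          _ ≤ t * C := mul_le_mul_of_nonneg_right ht.1 hC.le
      calc C * (Y+1) ≤ t * (C/s) * (Y+1) := mul_le_mul_of_nonneg_right h3 hY1
        _ = t * (C/s*(Y+1)) := by ring
    linarith only [h1, h2, hkey]
  have hA2 := aux_comp hs1.le (fun t _ => hgd t) hφd hlow
  -- expand Φ(1) − Φ(s)
  have eΦ : (1/(C*α)) * ((1:ℝ) ^ α * X) - (C/s*(Y+1)) * 1
      - ((1/(C*α)) * (s ^ α * X) - (C/s*(Y+1)) * s)
      = (1/(C*α)) * (1 - s ^ α) * X - (C/s) * (Y+1) * (1-s) := by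
    rw [Real.one_rpow]; ring
  rw [eΦ] at hA2
  have step2 : (C/s) * (Y+1) * (1-s) ≤ (C/s) * (Y+1) :=
    mul_le_of_le_one_right (by positivity) (by linarith)
  have hco : (1/(C*α)) * (1 - s ^ α) = 2*a + C/A := by
    have h2a : 2*a = C/A := by
      rw [hadef, mul_div_assoc']
      have : 2 * C / (2 * A) = C / A := mul_div_mul_left C A two_ne_zero
      linarith only [this]
    have e1 : C * s^α = C/A := by rw [hsα]; ring
    linarith only [hc0, e1, h2a]
  rw [hco] at hA2
  -- bound for M * s
  have hMs : M * s ≤ C/A * X + C * (P*Z) + C * P := by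
    have e1 : s ^ (α-1) * s = s ^ α := rpow_sub_one_mul hs0.le hα
    have e2 : P ^ (α-1) * P = X := rpow_sub_one_mul hP0 hα
    have e3 : C * (s ^ (α-1) * P ^ (α-1) + Z + 1) * P * s
        = C * (s^α * X) + C * (P*Z) * s + C * P * s := by
      rw [← e1, ← e2]; ring
    rw [hMdef, e3, hsα]
    have h4 : C * (P*Z) * s ≤ C * (P*Z) :=
      mul_le_of_le_one_right (by positivity) hs1.le
    have h5 : C * P * s ≤ C * P :=
      mul_le_of_le_one_right (by positivity) hs1.le
    have h6 : C * (1/A * X) = C/A * X := by ring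
    linarith [h6.le, h6.ge]
  -- Young's inequality, twice
  have hγq : γ * q = β := by
    rw [hγdef, hqdef]
    have h1 : α ≠ 0 := hα0.ne'
    have h2 : α - 1 ≠ 0 := hα1.ne'
    field_simp
  have hZq : Z ^ q = Y := by
    rw [hZdef, hYdef, ← Real.rpow_mul hm.le, hγq]
  have hy1 : C * (P * Z) ≤ a/2 * X + K * Y / q := by
    have h := Real.young_inequality_of_nonneg (mul_nonneg hlam0.le hP0)
      (mul_nonneg (le_of_lt (by positivity : (0:ℝ) < C/lam)) hZ0) hq
    have elam : lam * (C/lam) = C := by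
      rw [mul_div_assoc']
      exact mul_div_cancel_left₀ C hlam0.ne'
    have e1 : lam * P * (C / lam * Z) = C * (P * Z) := by
      calc lam * P * (C / lam * Z) = lam * (C/lam) * (P*Z) := by ring
        _ = C * (P*Z) := by rw [elam]
    have e2 : (lam * P) ^ α = lam ^ α * X := by
      rw [hXdef]; exact Real.mul_rpow hlam0.le hP0
    have e3 : (C / lam * Z) ^ q = K * Y := by
      rw [Real.mul_rpow (by positivity) hZ0, hZq, hKdef]
    rw [e1, e2, e3, hlamα] at h
    calc C * (P * Z) ≤ (a * α / 2 * X) / α + K * Y / q := h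
      _ = a/2 * X + K * Y / q := by
          have e4 : (a * α / 2 * X) / α = a/2 * X := by
            rw [div_eq_iff hα0.ne']; ring
          rw [e4]
  have hy2 : C * P ≤ a/2 * X + K / q := by
    have h := Real.young_inequality_of_nonneg (mul_nonneg hlam0.le hP0)
      (le_of_lt (by positivity : (0:ℝ) < C/lam)) hq
    have elam : lam * (C/lam) = C := by
      rw [mul_div_assoc']
      exact mul_div_cancel_left₀ C hlam0.ne'
    have e1 : lam * P * (C / lam) = C * P := by
      calc lam * P * (C / lam) = lam * (C/lam) * P := by ring
        _ = C * P := by rw [elam]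
    have e2 : (lam * P) ^ α = lam ^ α * X := by
      rw [hXdef]; exact Real.mul_rpow hlam0.le hP0
    rw [e1, e2, hlamα, ← hKdef] at h
    calc C * P ≤ (a * α / 2 * X) / α + K / q := h
      _ = a/2 * X + K / q := by
          have e4 : (a * α / 2 * X) / α = a/2 * X := by
            rw [div_eq_iff hα0.ne']; ring
          rw [e4]
  -- assemble
  have hg1 : H ((1:ℝ) • p) m = H p m := by rw [one_smul]
  have hg0 : H ((0:ℝ) • p) m = H 0 m := by rw [zero_smul]
  have hH0 : -C * (Y + 1) ≤ H ((0:ℝ) • p) m := by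
    rw [hg0]; exact h0 m hm
  have hKq : K * Y / q + K / q ≤ K * (Y + 1) := by
    have h1 : K * Y / q ≤ K * Y := div_le_self (by positivity) hq1.le
    have h2 : K / q ≤ K := div_le_self hK0.le hq1.le
    linarith only [h1, h2]
  have core : a * X - B * (Y+1) ≤ H p m := by
    rw [hBdef]
    linarith only [hA2, hB1, hMs, hy1, hy2, hH0, hKq, step2, hg1]
  -- conclude
  have hC'a : 1/(max (1/a) B + 1) ≤ a := by
    rw [div_le_iff₀ (by positivity)]
    have hmax : 1/a ≤ max (1/a) B := le_max_left _ _
    have h1 : a * (1/a) = 1 := by field_simp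
    nlinarith only [mul_le_mul_of_nonneg_left hmax ha0.le, h1, ha0]
  have hC'B : B ≤ max (1/a) B + 1 := le_trans (le_max_right _ _) (by linarith)
  have h1 := mul_le_mul_of_nonneg_right hC'a hX0
  have h2 := mul_le_mul_of_nonneg_right hC'B (by linarith : (0:ℝ) ≤ Y+1)
  exact le_trans (sub_le_sub h1 h2) core
end

section
/- Let X be a reflexive Banach space, K ⊆ X a nonempty convex subset, and A : K → X' a monotone operator (⟨A[v₁] − A[v₂], v₁ − v₂⟩ ≥ 0 for all v₁, v₂ ∈ K) that is coercive, i.e., there exists v̄ ∈ K with ⟨A[v] − A[v̄], v − v̄⟩ / ‖v‖ → +∞ as ‖v‖ → ∞ with v ∈ K. Then there exists u in the (norm) closure of K such that ⟨A[v], v − u⟩ ≥ 0 for all v ∈ K. -/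
open Real Set NormedSpace

/-- Finite Debrunner–Flor step via LP duality / Hahn–Banach separation. -/
lemma simplex_step {X : Type*} [NormedAddCommGroup X] [NormedSpace ℝ X]
    (A : X → StrongDual ℝ X) {ι : Type*} [Fintype ι] [DecidableEq ι] [Nonempty ι]
    (v : ι → X)
    (hmono : ∀ i j, 0 ≤ (A (v i) - A (v j)) (v i - v j)) :
    ∃ μ ∈ stdSimplex ℝ ι, ∀ i, 0 ≤ (A (v i)) (v i - ∑ j, μ j • v j) := by
  by_contra hcon
  push_neg at hcon
  -- the affine test map
  set T : (ι → ℝ) → (ι → ℝ) := fun μ i => (A (v i)) ((∑ j, μ j • v j) - v i) with hT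
  have hTcont : Continuous T := by
    refine continuous_pi fun i => (A (v i)).continuous.comp ?_
    exact (continuous_finset_sum _ fun j _ => (continuous_apply j).smul continuous_const).sub
      continuous_const
  -- image of simplex is convex
  have hTaff : ∀ (a b : ℝ) (μ₁ μ₂ : ι → ℝ), a + b = 1 →
      T (a • μ₁ + b • μ₂) = a • T μ₁ + b • T μ₂ := by
    intro a b μ₁ μ₂ hab
    funext i
    have hsum : (∑ j, (a • μ₁ + b • μ₂) j • v j) - v i
        = a • ((∑ j, μ₁ j • v j) - v i) + b • ((∑ j, μ₂ j • v j) - v i) := by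
      have h0 : (∑ j, (a • μ₁ + b • μ₂) j • v j)
          = a • (∑ j, μ₁ j • v j) + b • (∑ j, μ₂ j • v j) := by
        rw [Finset.smul_sum, Finset.smul_sum, ← Finset.sum_add_distrib]
        refine Finset.sum_congr rfl fun j _ => ?_
        simp [Pi.add_apply, Pi.smul_apply, add_smul, smul_smul]
      rw [h0]
      have h1 : v i = (a + b) • v i := by rw [hab, one_smul]
      rw [smul_sub, smul_sub]
      nth_rewrite 1 [h1]
      rw [add_smul]
      abel
    calc T (a • μ₁ + b • μ₂) i
        = (A (v i)) ((∑ j, (a • μ₁ + b • μ₂) j • v j) - v i) := rfl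
      _ = a • (A (v i)) ((∑ j, μ₁ j • v j) - v i)
          + b • (A (v i)) ((∑ j, μ₂ j • v j) - v i) := by rw [hsum, map_add, map_smul, map_smul]
      _ = (a • T μ₁ + b • T μ₂) i := rfl
  have hDconv : Convex ℝ (T '' stdSimplex ℝ ι) := by
    rintro x ⟨μ₁, hμ₁, rfl⟩ y ⟨μ₂, hμ₂, rfl⟩ a b ha hb hab
    exact ⟨a • μ₁ + b • μ₂, convex_stdSimplex ℝ ι hμ₁ hμ₂ ha hb hab,
      hTaff a b μ₁ μ₂ hab⟩
  have hDcomp : IsCompact (T '' stdSimplex ℝ ι) :=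
    (isCompact_stdSimplex ℝ ι).image hTcont
  -- nonpositive orthant
  set N : Set (ι → ℝ) := {x | ∀ i, x i ≤ 0} with hN
  have hNconv : Convex ℝ N := by
    intro x hx y hy a b ha hb hab i
    have := hx i; have := hy i
    simp only [Pi.add_apply, Pi.smul_apply, smul_eq_mul]
    nlinarith
  have hNclosed : IsClosed N := by
    have : N = ⋂ i, {x : ι → ℝ | x i ≤ 0} := by ext x; simp [hN]
    rw [this]
    exact isClosed_iInter fun i => isClosed_le (continuous_apply i) continuous_const
  have hdisj : Disjoint (T '' stdSimplex ℝ ι) N := by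
    rw [Set.disjoint_left]
    rintro x ⟨μ, hμ, rfl⟩ hxN
    obtain ⟨i, hi⟩ := hcon μ hμ
    have hle := hxN i
    simp only [hT, Set.mem_setOf_eq] at hle
    have heq : (A (v i)) ((∑ j, μ j • v j) - v i) = -((A (v i)) (v i - ∑ j, μ j • v j)) := by
      rw [← map_neg]; congr 1; abel
    rw [heq] at hle
    linarith
  obtain ⟨f, a, b, hfa, hab, hfb⟩ :=
    geometric_hahn_banach_compact_closed hDconv hDcomp hNconv hNclosed hdisj
  -- b < 0 since 0 ∈ N
  have hb0 : b < 0 := by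
    have := hfb 0 (fun i => le_refl 0)
    simpa using this
  -- coordinates of f are ≤ 0
  set p : ι → ℝ := fun i => -(f fun j => if i = j then (1:ℝ) else 0) with hp
  have hpnonneg : ∀ i, 0 ≤ p i := by
    intro i
    by_contra hneg
    push_neg at hneg
    set e : ι → ℝ := fun j => if i = j then (1:ℝ) else 0 with he
    have hfe : 0 < f e := by
      have : p i < 0 := hneg
      simp only [hp] at this
      linarith
    set t : ℝ := (|b| + 1) / f e with ht
    have htpos : 0 < t := div_pos (by positivity) hfe
    have hmem : (-t) • e ∈ N := by
      intro j
      simp only [Pi.smul_apply, smul_eq_mul, he]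
      by_cases hji : i = j <;> simp [hji] <;> nlinarith
    have h2 := hfb _ hmem
    rw [map_smul] at h2
    simp only [smul_eq_mul] at h2
    have h3 : -t * f e = -(|b| + 1) := by rw [ht, neg_mul, div_mul_cancel₀ _ hfe.ne']
    rw [h3] at h2
    have h4 : -|b| ≤ b := neg_abs_le b
    linarith
  -- f x = -∑ x i * p i
  have hfrep : ∀ x : ι → ℝ, f x = -∑ i, x i * p i := by
    intro x
    conv_lhs => rw [pi_eq_sum_univ x]
    rw [map_sum, ← Finset.sum_neg_distrib]
    refine Finset.sum_congr rfl fun i _ => ?_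
    rw [map_smul]
    simp [hp, smul_eq_mul, mul_comm]
  -- total mass positive
  have hppos : 0 < ∑ i, p i := by
    rcases (Finset.sum_nonneg (fun i (_ : i ∈ Finset.univ) => hpnonneg i)).lt_or_eq with h | h
    · exact h
    · exfalso
      have hzero : ∀ i, p i = 0 := fun i =>
        (Finset.sum_eq_zero_iff_of_nonneg (fun i _ => hpnonneg i)).1 h.symm i (Finset.mem_univ i)
      have hμ0 := ite_eq_mem_stdSimplex ℝ (Classical.arbitrary ι)
      have hfT := hfa _ ⟨_, hμ0, rfl⟩
      rw [hfrep] at hfT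
      simp only [hzero, mul_zero, Finset.sum_const_zero, neg_zero] at hfT
      linarith
  set S := ∑ i, p i with hS
  set μ : ι → ℝ := fun i => p i / S with hμ
  have hμmem : μ ∈ stdSimplex ℝ ι := ⟨fun i => div_nonneg (hpnonneg i) hppos.le,
    by rw [hμ, ← Finset.sum_div]; exact div_self hppos.ne'⟩
  have hfT : f (T μ) < 0 := lt_trans (lt_trans (hfa _ ⟨μ, hμmem, rfl⟩) hab) hb0
  rw [hfrep] at hfT
  have hQp : 0 < ∑ i, (T μ) i * p i := by linarith
  have hpS : ∀ i, p i = S * μ i := fun i => by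
    rw [hμ]; field_simp
  have hQμ : 0 < ∑ i, μ i * (T μ) i := by
    have h5 : ∑ i, (T μ) i * p i = S * ∑ i, μ i * (T μ) i := by
      rw [Finset.mul_sum]
      exact Finset.sum_congr rfl fun i _ => by rw [hpS i]; ring
    rw [h5] at hQp
    by_contra hle
    push_neg at hle
    nlinarith
  -- monotonicity forces the diagonal quantity to be ≤ 0
  have hexpand : ∀ i, (T μ) i = ∑ j, μ j * ((A (v i)) (v j - v i)) := by
    intro i
    show (A (v i)) ((∑ j, μ j • v j) - v i) = _
    have h1 : (∑ j, μ j • v j) - v i = ∑ j, μ j • (v j - v i) := by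
      rw [show ∑ j, μ j • (v j - v i) = (∑ j, μ j • v j) - (∑ j, μ j) • v i by
        rw [Finset.sum_smul, ← Finset.sum_sub_distrib]
        exact Finset.sum_congr rfl fun j _ => smul_sub _ _ _, hμmem.2, one_smul]
    rw [h1, map_sum]
    exact Finset.sum_congr rfl fun j _ => by rw [map_smul]; simp [smul_eq_mul]
  set c : ι → ι → ℝ := fun i j => (A (v i)) (v j - v i) with hc
  have hcsum : ∀ i j, c i j + c j i ≤ 0 := by
    intro i j
    have h := hmono i j
    simp only [ContinuousLinearMap.sub_apply, map_sub] at h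
    simp only [hc, map_sub]
    linarith
  have hQle : ∑ i, μ i * (T μ) i ≤ 0 := by
    have h1 : ∑ i, μ i * (T μ) i = ∑ i, ∑ j, μ i * (μ j * c i j) := by
      refine Finset.sum_congr rfl fun i _ => ?_
      rw [hexpand i, Finset.mul_sum]
    have h2 : ∑ i, ∑ j, (μ i * (μ j * c i j)) = ∑ i, ∑ j, μ j * (μ i * c j i) :=
      Finset.sum_comm
    have h3 : (2:ℝ) * ∑ i, ∑ j, μ i * (μ j * c i j)
        = ∑ i, ∑ j, (μ i * μ j) * (c i j + c j i) := by
      rw [two_mul]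
      nth_rewrite 2 [h2]
      rw [← Finset.sum_add_distrib]
      refine Finset.sum_congr rfl fun i _ => ?_
      rw [← Finset.sum_add_distrib]
      exact Finset.sum_congr rfl fun j _ => by ring
    have h4 : ∑ i, ∑ j, (μ i * μ j) * (c i j + c j i) ≤ 0 := by
      refine Finset.sum_nonpos fun i _ => Finset.sum_nonpos fun j _ =>
        mul_nonpos_of_nonneg_of_nonpos (mul_nonneg (hμmem.1 i) (hμmem.1 j)) (hcsum i j)
    rw [h1]
    linarith
  linarith


/-- Variational inequality on a compact convex set, by FIP + the simplex step. -/
lemma compact_vi {X : Type*} [NormedAddCommGroup X] [NormedSpace ℝ X]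
    (A : X → StrongDual ℝ X) (C : Set X) (hC : IsCompact C) (hCconv : Convex ℝ C)
    (hne : C.Nonempty)
    (hmono : ∀ v₁ ∈ C, ∀ v₂ ∈ C, 0 ≤ (A v₁ - A v₂) (v₁ - v₂)) :
    ∃ u ∈ C, ∀ v ∈ C, 0 ≤ (A v) (v - u) := by
  classical
  obtain ⟨w₀, hw₀⟩ := hne
  have key : (C ∩ ⋂ v : ↥C, {u : X | 0 ≤ (A ↑v) (↑v - u)}).Nonempty := by
    refine hC.inter_iInter_nonempty _ (fun v => ?_) (fun F => ?_)
    · have : Continuous fun u : X => (A ↑v) (↑v - u) :=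
        (A ↑v).continuous.comp (continuous_const.sub continuous_id)
      exact isClosed_le continuous_const this
    · -- finite subfamily: use the simplex step on Option ↥F
      set g : Option ↥F → X := fun o => o.elim w₀ (fun x => ↑↑x) with hg
      have hgC : ∀ o, g o ∈ C := by
        rintro (_ | x)
        · exact hw₀
        · exact x.1.2
      obtain ⟨μ, hμ, hineq⟩ := simplex_step A g (fun i j => hmono _ (hgC i) _ (hgC j))
      set u := ∑ j, μ j • g j with hu
      have huC : u ∈ C := hCconv.sum_mem (fun i _ => hμ.1 i) hμ.2 (fun i _ => hgC i)
      refine ⟨u, huC, ?_⟩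
      simp only [Set.mem_iInter]
      intro v hvF
      exact hineq (some ⟨v, hvF⟩)
  obtain ⟨u, huC, hu⟩ := key
  refine ⟨u, huC, fun v hv => ?_⟩
  have := Set.mem_iInter.1 hu ⟨v, hv⟩
  exact this


/-- abstract existence theorem for monotone coercive operators on a
nonempty convex subset of a reflexive Banach space (Theorem 2.10). -/
theorem stmt8 {X : Type*} [NormedAddCommGroup X] [NormedSpace ℝ X] [CompleteSpace X]
    (hrefl : Function.Surjective (NormedSpace.inclusionInDoubleDual ℝ X))
    (K : Set X) (hne : K.Nonempty) (hconv : Convex ℝ K)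
    (A : X → StrongDual ℝ X)
    (hmono : ∀ v₁ ∈ K, ∀ v₂ ∈ K, 0 ≤ (A v₁ - A v₂) (v₁ - v₂))
    (hcoerc : ∃ v₀ ∈ K, ∀ M : ℝ, ∃ R : ℝ, ∀ v ∈ K, R ≤ ‖v‖ →
      M ≤ ((A v - A v₀) (v - v₀)) / ‖v‖) :
    ∃ u ∈ closure K, ∀ v ∈ K, 0 ≤ (A v) (v - u) := by
  classical
  obtain ⟨v₀, hv₀, hco⟩ := hcoerc
  obtain ⟨R, hR⟩ := hco (‖A v₀‖ + 1)
  set r' : ℝ := max (max R 1) (‖A v₀‖ * ‖v₀‖) with hr'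
  set r : ℝ := 2 * r' + ‖v₀‖ with hr
  -- Step 1: for each finite subset of K there is a bounded approximate solution in K
  have hfin : ∀ s : Finset X, ↑s ⊆ K → ∃ u ∈ K, ‖u‖ ≤ r ∧ ∀ v ∈ s, 0 ≤ (A v) (v - u) := by
    intro s hs
    set C : Set X := convexHull ℝ (insert v₀ ↑s) with hC
    have hCfin : (insert v₀ (↑s : Set X)).Finite := (s.finite_toSet).insert v₀
    have hCcomp : IsCompact C := hCfin.isCompact_convexHull (𝕜 := ℝ)
    have hCconv : Convex ℝ C := convex_convexHull ℝ _
    have hCK : C ⊆ K := convexHull_min (insert_subset hv₀ hs) hconv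
    have hv₀C : v₀ ∈ C := subset_convexHull ℝ _ (mem_insert v₀ _)
    obtain ⟨u, huC, hu⟩ := compact_vi A C hCcomp hCconv ⟨v₀, hv₀C⟩
      (fun v₁ h₁ v₂ h₂ => hmono v₁ (hCK h₁) v₂ (hCK h₂))
    refine ⟨u, hCK huC, ?_, fun v hv => hu v (subset_convexHull ℝ _ (mem_insert_of_mem _ hv))⟩
    -- bound via the midpoint
    set w : X := (1/2 : ℝ) • u + (1/2 : ℝ) • v₀ with hw
    have hwC : w ∈ C := hCconv huC hv₀C (by norm_num) (by norm_num) (by norm_num)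
    have h1 : 0 ≤ (A w) (w - u) := hu w hwC
    have hwv₀ : w - v₀ = -(w - u) := by rw [hw]; module
    have h2 : (A w) (w - v₀) ≤ 0 := by
      rw [hwv₀, map_neg]; linarith
    have h3 : (A w - A v₀) (w - v₀) ≤ ‖A v₀‖ * (‖w‖ + ‖v₀‖) := by
      have e1 : (A w - A v₀) (w - v₀) = (A w) (w - v₀) - (A v₀) (w - v₀) := by
        simp [ContinuousLinearMap.sub_apply]
      have e2 : -(A v₀) (w - v₀) ≤ ‖A v₀‖ * ‖w - v₀‖ := by
        calc -(A v₀) (w - v₀) = (A v₀) (v₀ - w) := by rw [← map_neg]; congr 1; abel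
          _ ≤ |(A v₀) (v₀ - w)| := le_abs_self _
          _ ≤ ‖A v₀‖ * ‖v₀ - w‖ := (A v₀).le_opNorm _
          _ = ‖A v₀‖ * ‖w - v₀‖ := by rw [norm_sub_rev]
      have e3 : ‖w - v₀‖ ≤ ‖w‖ + ‖v₀‖ := norm_sub_le _ _
      have e4 : ‖A v₀‖ * ‖w - v₀‖ ≤ ‖A v₀‖ * (‖w‖ + ‖v₀‖) :=
        mul_le_mul_of_nonneg_left e3 (norm_nonneg _)
      linarith
    have hwr' : ‖w‖ ≤ r' := by
      by_contra hgt
      push_neg at hgt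
      have hwK : w ∈ K := hCK hwC
      have hwR : R ≤ ‖w‖ := le_trans (le_trans (le_max_left R 1) (le_max_left _ _)) hgt.le
      have hw1 : (1:ℝ) ≤ ‖w‖ := le_trans (le_trans (le_max_right R 1) (le_max_left _ _)) hgt.le
      have hwpos : (0:ℝ) < ‖w‖ := lt_of_lt_of_le one_pos hw1
      have h5 := hR w hwK hwR
      rw [le_div_iff₀ hwpos] at h5
      have h6 : ‖A v₀‖ * ‖v₀‖ ≤ r' := le_max_right _ _
      nlinarith
    have hueq : u = (2:ℝ) • w - v₀ := by rw [hw]; module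
    calc ‖u‖ = ‖(2:ℝ) • w - v₀‖ := by rw [hueq]
      _ ≤ ‖(2:ℝ) • w‖ + ‖v₀‖ := norm_sub_le _ _
      _ = 2 * ‖w‖ + ‖v₀‖ := by rw [norm_smul]; norm_num
      _ ≤ 2 * r' + ‖v₀‖ := by linarith
  -- Step 2: weak-* compactness in the double dual
  set j : X → WeakDual ℝ (StrongDual ℝ X) := fun x => WeakDual.toStrongDual.symm
    (inclusionInDoubleDual ℝ X x) with hj
  have hjapp : ∀ (x : X) (f : StrongDual ℝ X), (j x) f = f x := fun x f => rfl
  set B : Set (WeakDual ℝ (StrongDual ℝ X)) :=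
    (⇑WeakDual.toStrongDual ⁻¹' Metric.closedBall 0 r) ∩ closure (j '' K) with hB
  have hBcomp : IsCompact B :=
    (WeakDual.isCompact_closedBall (𝕜 := ℝ) 0 r).inter_right isClosed_closure
  set t : ↥K → Set (WeakDual ℝ (StrongDual ℝ X)) :=
    fun v => {φ | φ (A ↑v) ≤ (A ↑v) ↑v} with ht
  have key : (B ∩ ⋂ v : ↥K, t v).Nonempty := by
    refine hBcomp.inter_iInter_nonempty _ (fun v => ?_) (fun F => ?_)
    · exact isClosed_le (WeakDual.eval_continuous _) continuous_const
    · have hsK : ↑(F.image (fun (x : ↥K) => (x : X))) ⊆ K := by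
        intro x hx
        rw [Finset.coe_image] at hx
        obtain ⟨y, _, rfl⟩ := hx
        exact y.2
      obtain ⟨u, huK, hur, hu⟩ := hfin (F.image (fun (x : ↥K) => (x : X))) hsK
      refine ⟨j u, ⟨⟨?_, subset_closure (Set.mem_image_of_mem j huK)⟩, ?_⟩⟩
      · simp only [Set.mem_preimage, Metric.mem_closedBall, dist_zero_right]
        have : ‖WeakDual.toStrongDual (j u)‖ = ‖u‖ := (inclusionInDoubleDualLi ℝ).norm_map u
        exact (dist_zero_right (WeakDual.toStrongDual (j u))).trans_le (this.trans_le hur)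
      · simp only [Set.mem_iInter]
        intro v hvF
        have hmem : (v : X) ∈ F.image (fun (x : ↥K) => (x : X)) :=
          Finset.mem_image_of_mem (fun (x : ↥K) => (x : X)) hvF
        have := hu _ hmem
        have hsub : (A ↑v) (↑v - u) = (A ↑v) ↑v - (A ↑v) u := map_sub _ _ _
        simp only [ht, Set.mem_setOf_eq, hjapp]
        linarith [this, hsub ▸ this]
  obtain ⟨φ, ⟨hφball, hφcl⟩, hφt⟩ := key
  obtain ⟨u, hu⟩ := hrefl (WeakDual.toStrongDual φ)
  have hφapp : ∀ f : StrongDual ℝ X, φ f = f u := by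
    intro f
    have : φ f = (WeakDual.toStrongDual φ) f := rfl
    rw [this, ← hu]
    rfl
  -- u is in the closure of K
  have huK : u ∈ closure K := by
    by_contra hout
    obtain ⟨f, c, hfc, hcf⟩ := geometric_hahn_banach_point_closed
      (hconv.closure) isClosed_closure hout
    have hopen : IsOpen {ψ : WeakDual ℝ (StrongDual ℝ X) | ψ f < c} :=
      isOpen_lt (WeakDual.eval_continuous f) continuous_const
    have hφmem : φ ∈ {ψ : WeakDual ℝ (StrongDual ℝ X) | ψ f < c} := by
      simp only [Set.mem_setOf_eq, hφapp]; exact hfc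
    obtain ⟨ψ, hψ1, hψ2⟩ := mem_closure_iff.1 hφcl _ hopen hφmem
    obtain ⟨k, hkK, rfl⟩ := hψ2
    have : f k < c := by simpa [hjapp] using hψ1
    exact absurd (hcf k (subset_closure hkK)) (by linarith)
  refine ⟨u, huK, fun v hv => ?_⟩
  have := Set.mem_iInter.1 hφt ⟨v, hv⟩
  simp only [ht, Set.mem_setOf_eq, hφapp] at this
  rw [map_sub]
  linarith
end

section
/- Suppose H : ℝ^d × ℝ⁺ → ℝ satisfies the Lasry–Lions monotonicity condition and H(p,m) ≥ (1/C)|p|^α − C(m^β+1), H(0,m) ≤ −(1/C)m^β + C for constants C > 0, α > 1, β > 0. Let K(q) = |q| + |q|^α and H^ε(p,m) = min_q { H(p−q,m) + (1/ε)K(q) } for ε ∈ (0,1]. Then there exists a constant C' > 0 independent of ε such that H^ε(p,m) ≥ (1/C')|p|^α − C'(m^β + 1) for all (p,m). -/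
open Real Set RealInnerProductSpace

/-- uniform (in `ε`) lower bound for the infimal-convolution
regularization `H^ε` (eq:H-epsilon.lower.uniform of Proposition 5.3). -/
theorem stmt14 {d : ℕ} (H : EuclideanSpace ℝ (Fin d) → ℝ → ℝ)
    (DpH : EuclideanSpace ℝ (Fin d) → ℝ → EuclideanSpace ℝ (Fin d))
    (C α β : ℝ) (hC : 0 < C) (hα : 1 < α) (hβ : 0 < β)
    (hgrad : ∀ p : EuclideanSpace ℝ (Fin d), ∀ m > (0:ℝ),
      HasGradientAt (fun p' => H p' m) (DpH p m) p)
    (hmon : ∀ p₁ p₂ : EuclideanSpace ℝ (Fin d), ∀ m₁ > (0:ℝ), ∀ m₂ > (0:ℝ),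
      0 ≤ (-H p₁ m₁ + H p₂ m₂) * (m₁ - m₂) +
        ⟪m₁ • DpH p₁ m₁ - m₂ • DpH p₂ m₂, p₁ - p₂⟫)
    (hlow : ∀ p : EuclideanSpace ℝ (Fin d), ∀ m > (0:ℝ),
      (1/C) * ‖p‖ ^ α - C * (m ^ β + 1) ≤ H p m)
    (hup0 : ∀ m > (0:ℝ), H 0 m ≤ -(1/C) * m ^ β + C) :
    ∃ C' > (0:ℝ), ∀ ε ∈ Set.Ioc (0:ℝ) 1, ∀ p : EuclideanSpace ℝ (Fin d), ∀ m > (0:ℝ),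
      (1/C') * ‖p‖ ^ α - C' * (m ^ β + 1) ≤
        ⨅ q : EuclideanSpace ℝ (Fin d), (H (p - q) m + (1/ε) * (‖q‖ + ‖q‖ ^ α)) := by

  set C' : ℝ := (2:ℝ) ^ α * (C + 1) + C with hC'def
  have h2 : (0:ℝ) < (2:ℝ) ^ α := Real.rpow_pos_of_pos (by norm_num) α
  have hC' : 0 < C' := by positivity
  clear_value C'
  refine ⟨C', hC', ?_⟩
  intro ε hε p m hm
  apply le_ciInf
  intro q
  have hα0 : (0:ℝ) ≤ α := by linarith
  have hq0 : (0:ℝ) ≤ ‖q‖ ^ α := Real.rpow_nonneg (norm_nonneg q) α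
  have hpq0 : (0:ℝ) ≤ ‖p - q‖ ^ α := Real.rpow_nonneg (norm_nonneg _) α
  have hKq : ‖q‖ ^ α ≤ (1/ε) * (‖q‖ + ‖q‖ ^ α) := by
    have h1 : 1 ≤ 1/ε := by
      rw [le_div_iff₀ hε.1]; linarith [hε.2]
    nlinarith [norm_nonneg q]
  have hH : (1/C) * ‖p - q‖ ^ α - C * (m ^ β + 1) ≤ H (p - q) m := hlow _ m hm
  have htri : ‖p‖ ≤ ‖q‖ + ‖p - q‖ := by
    have := norm_add_le q (p - q)
    simpa using this
  have hdiv : (‖p‖ / 2) ^ α = ‖p‖ ^ α / (2:ℝ) ^ α :=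
    Real.div_rpow (norm_nonneg p) (by norm_num) α
  have hp0 : (0:ℝ) ≤ ‖p‖ ^ α := Real.rpow_nonneg (norm_nonneg p) α
  have key : (1/C') * ‖p‖ ^ α ≤ ‖q‖ ^ α + (1/C) * ‖p - q‖ ^ α := by
    rcases le_or_gt (‖p‖ / 2) ‖q‖ with h | h
    · have h1 : (‖p‖ / 2) ^ α ≤ ‖q‖ ^ α :=
        Real.rpow_le_rpow (by positivity) h hα0
      rw [hdiv] at h1
      have hi1 : 1/C' ≤ 1/(2:ℝ)^α := by
        apply one_div_le_one_div_of_le h2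
        nlinarith
      have h2' : (1/C') * ‖p‖ ^ α ≤ (1/(2:ℝ)^α) * ‖p‖ ^ α :=
        mul_le_mul_of_nonneg_right hi1 hp0
      have h3 : (1/(2:ℝ)^α) * ‖p‖ ^ α = ‖p‖ ^ α / (2:ℝ)^α := by ring
      have : (0:ℝ) ≤ (1/C) * ‖p - q‖ ^ α := by positivity
      linarith
    · have hq' : ‖p‖ / 2 ≤ ‖p - q‖ := by linarith
      have h1 : (‖p‖ / 2) ^ α ≤ ‖p - q‖ ^ α :=
        Real.rpow_le_rpow (by positivity) hq' hα0
      rw [hdiv] at h1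
      have hi2 : 1/C' ≤ 1/(C * (2:ℝ)^α) := by
        apply one_div_le_one_div_of_le (by positivity)
        nlinarith
      have h2' : (1/C') * ‖p‖ ^ α ≤ (1/(C * (2:ℝ)^α)) * ‖p‖ ^ α :=
        mul_le_mul_of_nonneg_right hi2 hp0
      have h3 : (1/(C * (2:ℝ)^α)) * ‖p‖ ^ α = (1/C) * (‖p‖ ^ α / (2:ℝ)^α) := by
        field_simp
      have h4 : (1/C) * (‖p‖ ^ α / (2:ℝ)^α) ≤ (1/C) * ‖p - q‖ ^ α :=
        mul_le_mul_of_nonneg_left h1 (by positivity)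
      linarith
  have hmb : (0:ℝ) < m ^ β + 1 := by positivity
  have hCC' : C ≤ C' := by nlinarith
  have hm' : C * (m ^ β + 1) ≤ C' * (m ^ β + 1) :=
    mul_le_mul_of_nonneg_right hCC' hmb.le
  linarith
end
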